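/- In the racbox-simulation setting (with no assumption of PR-correlations), the following trade-off inequality holds: (1/2)·I(a ⊕ x : b̃ | (ỹ, s); given y = true) + (1/2)·I(a : b̃ | (ỹ, s); given y = false) + I(z : b̃ | (ỹ, s, y)) ≤ (1/2)·I(a : a ⊕ x : z | (ỹ, s)) + H(b̃ | (ỹ, s, y)), where I(X : Y : Z | W) := H(X|W) + H(Y|W) + H(Z|W) − H(X,Y,Z|W). -/
import Mathlib


open scoped Classical

/-- A probability mass function on a finite type. -/
def IsPMF {Ω : Type*} [Fintype Ω] (P : Ω → ℝ) : Prop :=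
  (∀ ω, 0 ≤ P ω) ∧ ∑ ω, P ω = 1

/-- Probability of an event under a pmf. -/
noncomputable def Pr {Ω : Type*} [Fintype Ω] (P : Ω → ℝ) (E : Ω → Prop) : ℝ :=
  ∑ ω, if E ω then P ω else 0

/-- Shannon entropy (in bits) of a random variable `X` under pmf `P`,
with the convention `0 · log₂ 0 = 0`. -/
noncomputable def ent {Ω α : Type*} [Fintype Ω] [Fintype α]
    (P : Ω → ℝ) (X : Ω → α) : ℝ :=
  -∑ v : α, Pr P (fun ω => X ω = v) * Real.logb 2 (Pr P (fun ω => X ω = v))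

/-- Conditional entropy `H(X|Y) = H(X,Y) - H(Y)`. -/
noncomputable def condEnt {Ω α β : Type*} [Fintype Ω] [Fintype α] [Fintype β]
    (P : Ω → ℝ) (X : Ω → α) (Y : Ω → β) : ℝ :=
  ent P (fun ω => (X ω, Y ω)) - ent P Y

/-- Mutual information `I(X:Y) = H(X) + H(Y) - H(X,Y)`. -/
noncomputable def mutInf {Ω α β : Type*} [Fintype Ω] [Fintype α] [Fintype β]
    (P : Ω → ℝ) (X : Ω → α) (Y : Ω → β) : ℝ :=
  ent P X + ent P Y - ent P (fun ω => (X ω, Y ω))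

/-- Conditional mutual information
`I(X:Y|Z) = H(X,Z) + H(Y,Z) - H(X,Y,Z) - H(Z)`. -/
noncomputable def condMutInf {Ω α β γ : Type*} [Fintype Ω] [Fintype α] [Fintype β] [Fintype γ]
    (P : Ω → ℝ) (X : Ω → α) (Y : Ω → β) (Z : Ω → γ) : ℝ :=
  ent P (fun ω => (X ω, Z ω)) + ent P (fun ω => (Y ω, Z ω))
    - ent P (fun ω => (X ω, Y ω, Z ω)) - ent P Z

/-- The pmf conditioned on an event `E`. -/
noncomputable def condPmf {Ω : Type*} [Fintype Ω] (P : Ω → ℝ) (E : Ω → Prop) : Ω → ℝ :=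
  fun ω => if E ω then P ω / Pr P E else 0

/-- The triple (conditional) information
`I(X:Y:Z|W) = H(X|W) + H(Y|W) + H(Z|W) - H(X,Y,Z|W)`. -/
noncomputable def tripleCondInf {Ω α β γ δ : Type*}
    [Fintype Ω] [Fintype α] [Fintype β] [Fintype γ] [Fintype δ]
    (P : Ω → ℝ) (X : Ω → α) (Y : Ω → β) (Z : Ω → γ) (W : Ω → δ) : ℝ :=
  condEnt P X W + condEnt P Y W + condEnt P Z W
    - condEnt P (fun ω => (X ω, Y ω, Z ω)) W

section Lemmas

open Finset

variable {Ω Ω' α β γ κ : Type*} [Fintype Ω] [Fintype Ω'] [Fintype α] [Fintype β] [Fintype γ]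
  [Fintype κ]

lemma Pr_nonneg {P : Ω → ℝ} (h : ∀ ω, 0 ≤ P ω) (E : Ω → Prop) : 0 ≤ Pr P E := by
  refine Finset.sum_nonneg fun ω _ => ?_
  by_cases hE : E ω <;> simp [hE, h ω]

lemma Pr_congr {P : Ω → ℝ} {E F : Ω → Prop} (h : ∀ ω, E ω ↔ F ω) : Pr P E = Pr P F := by
  unfold Pr; exact Finset.sum_congr rfl fun ω _ => by rw [if_congr (h ω) rfl rfl]

lemma Pr_fiber_sum {P : Ω → ℝ} (E : Ω → Prop) (X : Ω → κ) :
    Pr P E = ∑ k, Pr P (fun ω => E ω ∧ X ω = k) := by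
  unfold Pr
  rw [Finset.sum_comm]
  refine Finset.sum_congr rfl fun ω _ => ?_
  by_cases hE : E ω <;> simp [hE]

lemma sum_Pr_fiber {P : Ω → ℝ} (X : Ω → κ) :
    ∑ k, Pr P (fun ω => X ω = k) = ∑ ω, P ω := by
  unfold Pr
  rw [Finset.sum_comm]
  exact Finset.sum_congr rfl fun ω _ => by simp

lemma Pr_zero_of_support {P : Ω → ℝ} (h0 : ∀ ω, 0 ≤ P ω) {E : Ω → Prop}
    (h : Pr P E = 0) : ∀ ω, E ω → P ω = 0 := by
  intro ω hE
  have := (Finset.sum_eq_zero_iff_of_nonneg (fun ω _ => by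
    by_cases hE : E ω <;> simp [hE, h0 ω])).mp h ω (Finset.mem_univ ω)
  simpa [hE] using this

lemma Pr_mono {P : Ω → ℝ} (h0 : ∀ ω, 0 ≤ P ω) {E F : Ω → Prop}
    (h : ∀ ω, E ω → F ω) : Pr P E ≤ Pr P F := by
  refine Finset.sum_le_sum fun ω _ => ?_
  by_cases hE : E ω
  · simp [hE, h ω hE]
  · by_cases hF : F ω <;> simp [hE, hF, h0 ω]

lemma ent_congr {P : Ω → ℝ} {P' : Ω' → ℝ} {X : Ω → α} {X' : Ω' → α}
    (h : ∀ v, Pr P (fun ω => X ω = v) = Pr P' (fun ω => X' ω = v)) :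
    ent P X = ent P' X' := by
  unfold ent; congr 1; exact Finset.sum_congr rfl fun v _ => by rw [h v]

lemma ent_comp_inj {P : Ω → ℝ} (X : Ω → α) (f : α → β) (hf : Function.Injective f) :
    ent P (fun ω => f (X ω)) = ent P X := by
  unfold ent
  congr 1
  have key : ∀ w ∈ Finset.univ, w ∉ Finset.image f Finset.univ →
      (Pr P fun ω => f (X ω) = w) * Real.logb 2 (Pr P fun ω => f (X ω) = w) = 0 := by
    intro w _ hw
    have : Pr P (fun ω => f (X ω) = w) = 0 := by
      unfold Pr
      refine Finset.sum_eq_zero fun ω _ => ?_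
      have : f (X ω) ≠ w := fun hc => hw (Finset.mem_image.mpr ⟨X ω, Finset.mem_univ _, hc⟩)
      simp [this]
    rw [this]; simp
  rw [← Finset.sum_subset (Finset.subset_univ _) key,
    Finset.sum_image (fun a _ b _ hab => hf hab)]
  refine Finset.sum_congr rfl fun v _ => ?_
  have : Pr P (fun ω => f (X ω) = f v) = Pr P (fun ω => X ω = v) :=
    Pr_congr fun ω => hf.eq_iff
  rw [this]

lemma ent_support_congr {P : Ω → ℝ} {X X' : Ω → α}
    (h : ∀ ω, P ω ≠ 0 → X ω = X' ω) : ent P X = ent P X' := by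
  refine ent_congr fun v => ?_
  refine Finset.sum_congr rfl fun ω _ => ?_
  by_cases hP : P ω = 0
  · by_cases h1 : X ω = v <;> by_cases h2 : X' ω = v <;> simp [h1, h2, hP]
  · simp only [h ω hP]

lemma condPmf_nonneg {P : Ω → ℝ} (h0 : ∀ ω, 0 ≤ P ω) (E : Ω → Prop) :
    ∀ ω, 0 ≤ condPmf P E ω := by
  intro ω
  unfold condPmf
  by_cases hE : E ω
  · simp only [hE, if_true]
    exact div_nonneg (h0 ω) (Pr_nonneg h0 E)
  · simp [hE]

lemma Pr_condPmf {P : Ω → ℝ} (E F : Ω → Prop) :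
    Pr (condPmf P E) F = Pr P (fun ω => F ω ∧ E ω) / Pr P E := by
  unfold condPmf Pr
  rw [Finset.sum_div]
  refine Finset.sum_congr rfl fun ω _ => ?_
  by_cases hF : F ω <;> by_cases hE : E ω <;> simp [hF, hE]

lemma condPmf_isPMF {P : Ω → ℝ} (hP : IsPMF P) {E : Ω → Prop} (hE : Pr P E ≠ 0) :
    IsPMF (condPmf P E) := by
  constructor
  · exact condPmf_nonneg hP.1 E
  · have : ∑ ω, condPmf P E ω = Pr (condPmf P E) (fun _ => True) := by
      unfold Pr; simp
    rw [this, Pr_condPmf]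
    have : Pr P (fun ω => True ∧ E ω) = Pr P E := Pr_congr fun ω => by simp
    rw [this, div_self hE]

lemma condPmf_congr {P : Ω → ℝ} {E F : Ω → Prop} (h : ∀ ω, E ω ↔ F ω) :
    condPmf P E = condPmf P F := by
  funext ω
  unfold condPmf
  rw [Pr_congr h, if_congr (h ω) rfl rfl]

lemma condPmf_apply {P : Ω → ℝ} (E : Ω → Prop) (ω : Ω) :
    condPmf P E ω = if E ω then P ω / Pr P E else 0 := rfl

lemma condPmf_condPmf {P : Ω → ℝ} (h0 : ∀ ω, 0 ≤ P ω) (E F : Ω → Prop) :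
    condPmf (condPmf P E) F = condPmf P (fun ω => E ω ∧ F ω) := by
  funext ω
  simp only [condPmf_apply]
  rw [Pr_condPmf]
  by_cases hE : E ω <;> by_cases hF : F ω <;>
    simp only [hE, hF, if_true, if_false, true_and, and_true, and_false, false_and,
      zero_div]
  by_cases he : Pr P E = 0
  · have h1 : P ω = 0 := Pr_zero_of_support h0 he ω hE
    simp [he, h1]
  · by_cases hq : Pr P (fun ω => F ω ∧ E ω) = 0
    · have hq' : Pr P (fun ω => E ω ∧ F ω) = 0 := by
        rw [Pr_congr (fun ω => and_comm)]; exact hq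
      have h1 : P ω = 0 := Pr_zero_of_support h0 hq' ω ⟨hE, hF⟩
      simp [hq, hq', h1]
    · have hcc : Pr P (fun ω => F ω ∧ E ω) = Pr P (fun ω => E ω ∧ F ω) :=
        Pr_congr fun ω => and_comm
      rw [hcc] at hq ⊢
      field_simp

end Lemmas
section Lemmas2

open Finset

variable {Ω Ω' α β γ δ κ : Type*} [Fintype Ω] [Fintype Ω'] [Fintype α] [Fintype β] [Fintype γ]
  [Fintype δ] [Fintype κ]

lemma phi_mul (e q : ℝ) (he : e ≠ 0) :
    (e * q) * Real.logb 2 (e * q) = q * (e * Real.logb 2 e) + e * (q * Real.logb 2 q) := by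
  by_cases hq : q = 0
  · simp [hq]
  · rw [Real.logb_mul he hq]; ring

lemma ent_pair_chain {P : Ω → ℝ} (h0 : ∀ ω, 0 ≤ P ω) (X : Ω → α) (C : Ω → κ) :
    ent P (fun ω => (X ω, C ω)) = ent P C
      + ∑ k, Pr P (fun ω => C ω = k) * ent (condPmf P (fun ω => C ω = k)) X := by
  set e : κ → ℝ := fun k => Pr P (fun ω => C ω = k) with he_def
  set r : α → κ → ℝ := fun v k => Pr P (fun ω => X ω = v ∧ C ω = k) with hr_def
  have hq : ∀ v k, Pr (condPmf P (fun ω => C ω = k)) (fun ω => X ω = v) = r v k / e k :=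
    fun v k => Pr_condPmf _ _
  have hmarg : ∀ k, e k = ∑ v, r v k := by
    intro k
    show Pr P (fun ω => C ω = k) = ∑ v, Pr P fun ω => X ω = v ∧ C ω = k
    rw [Pr_fiber_sum (fun ω => C ω = k) X]
    exact Finset.sum_congr rfl fun v _ => Pr_congr fun ω => and_comm
  have hr_nonneg : ∀ v k, 0 ≤ r v k := fun v k => Pr_nonneg h0 _
  have hre : ∀ v k, r v k = e k * (r v k / e k) := by
    intro v k
    by_cases hek : e k = 0
    · have : r v k = 0 := by
        have hle : r v k ≤ e k := by
          rw [hmarg k]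
          exact Finset.single_le_sum (fun v _ => hr_nonneg v k) (Finset.mem_univ v)
        linarith [hr_nonneg v k]
      simp [this]
    · field_simp
  have epair : ent P (fun ω => (X ω, C ω))
      = -∑ v, ∑ k, r v k * Real.logb 2 (r v k) := by
    unfold ent
    rw [Fintype.sum_prod_type]
    congr 1
    refine Finset.sum_congr rfl fun v _ => Finset.sum_congr rfl fun k _ => ?_
    have : Pr P (fun ω => (X ω, C ω) = (v, k)) = r v k :=
      Pr_congr fun ω => by simp [Prod.ext_iff]
    rw [this]
  rw [epair]
  have eC : ent P C = -∑ k, e k * Real.logb 2 (e k) := rfl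
  have eck : ∀ k, ent (condPmf P (fun ω => C ω = k)) X
      = -∑ v, (r v k / e k) * Real.logb 2 (r v k / e k) := by
    intro k
    unfold ent
    congr 1
    exact Finset.sum_congr rfl fun v _ => by rw [hq v k]
  rw [eC]
  rw [Finset.sum_comm]
  have key : ∀ k, ∑ v, r v k * Real.logb 2 (r v k)
      = e k * Real.logb 2 (e k) + e k * (∑ v, (r v k / e k) * Real.logb 2 (r v k / e k)) := by
    intro k
    by_cases hek : e k = 0
    · have hr0 : ∀ v, r v k = 0 := by
        intro v
        have hle : r v k ≤ e k := by
          rw [hmarg k]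
          exact Finset.single_le_sum (fun v _ => hr_nonneg v k) (Finset.mem_univ v)
        linarith [hr_nonneg v k]
      simp [hr0, hek]
    · have hsum1 : ∑ v, r v k / e k = 1 := by
        rw [← Finset.sum_div, ← hmarg k, div_self hek]
      calc ∑ v, r v k * Real.logb 2 (r v k)
          = ∑ v, (e k * (r v k / e k)) * Real.logb 2 (e k * (r v k / e k)) := by
            refine Finset.sum_congr rfl fun v _ => by rw [← hre v k]
        _ = ∑ v, ((r v k / e k) * (e k * Real.logb 2 (e k))
              + e k * ((r v k / e k) * Real.logb 2 (r v k / e k))) := by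
            refine Finset.sum_congr rfl fun v _ => phi_mul _ _ hek
        _ = (∑ v, r v k / e k) * (e k * Real.logb 2 (e k))
              + e k * (∑ v, (r v k / e k) * Real.logb 2 (r v k / e k)) := by
            rw [Finset.sum_add_distrib, ← Finset.sum_mul, ← Finset.mul_sum]
        _ = _ := by rw [hsum1, one_mul]
  have : ∑ k, ∑ v, r v k * Real.logb 2 (r v k)
      = ∑ k, (e k * Real.logb 2 (e k)
          + e k * (∑ v, (r v k / e k) * Real.logb 2 (r v k / e k))) :=
    Finset.sum_congr rfl fun k _ => key k
  rw [this, Finset.sum_add_distrib]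
  have : ∑ k, e k * ent (condPmf P (fun ω => C ω = k)) X
      = ∑ k, e k * (-∑ v, (r v k / e k) * Real.logb 2 (r v k / e k)) :=
    Finset.sum_congr rfl fun k _ => by rw [eck k]
  rw [this]
  simp only [mul_neg]
  rw [Finset.sum_neg_distrib]
  ring

lemma ent_triple_assoc {P : Ω → ℝ} (X : Ω → α) (Y : Ω → β) (C : Ω → κ) :
    ent P (fun ω => ((X ω, Y ω), C ω)) = ent P (fun ω => (X ω, Y ω, C ω)) := by
  exact ent_comp_inj (fun ω => (X ω, Y ω, C ω)) (fun p => ((p.1, p.2.1), p.2.2))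
    (fun p q h => by
      obtain ⟨a, b, c⟩ := p; obtain ⟨a', b', c'⟩ := q
      simp_all [Prod.ext_iff])

lemma condEnt_decomp {P : Ω → ℝ} (h0 : ∀ ω, 0 ≤ P ω) (X : Ω → α) (C : Ω → κ) :
    condEnt P X C = ∑ k, Pr P (fun ω => C ω = k) * ent (condPmf P (fun ω => C ω = k)) X := by
  unfold condEnt
  rw [ent_pair_chain h0 X C]
  ring

lemma condMutInf_decomp {P : Ω → ℝ} (h0 : ∀ ω, 0 ≤ P ω) (X : Ω → α) (Y : Ω → β) (C : Ω → κ) :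
    condMutInf P X Y C
      = ∑ k, Pr P (fun ω => C ω = k) * mutInf (condPmf P (fun ω => C ω = k)) X Y := by
  unfold condMutInf
  rw [← ent_triple_assoc X Y C, ent_pair_chain h0 X C, ent_pair_chain h0 Y C,
    ent_pair_chain h0 (fun ω => (X ω, Y ω)) C]
  have : ∑ k, Pr P (fun ω => C ω = k) * mutInf (condPmf P (fun ω => C ω = k)) X Y
      = ∑ k, (Pr P (fun ω => C ω = k) * ent (condPmf P (fun ω => C ω = k)) X
          + Pr P (fun ω => C ω = k) * ent (condPmf P (fun ω => C ω = k)) Y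
          - Pr P (fun ω => C ω = k) * ent (condPmf P (fun ω => C ω = k))
              (fun ω => (X ω, Y ω))) := by
    refine Finset.sum_congr rfl fun k _ => ?_
    unfold mutInf
    ring
  rw [this, Finset.sum_sub_distrib, Finset.sum_add_distrib]
  ring

lemma tripleCondInf_decomp {P : Ω → ℝ} (h0 : ∀ ω, 0 ≤ P ω)
    (X : Ω → α) (Y : Ω → β) (Z : Ω → γ) (C : Ω → κ) :
    tripleCondInf P X Y Z C
      = ∑ k, Pr P (fun ω => C ω = k) *
          (ent (condPmf P (fun ω => C ω = k)) X + ent (condPmf P (fun ω => C ω = k)) Y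
            + ent (condPmf P (fun ω => C ω = k)) Z
            - ent (condPmf P (fun ω => C ω = k)) (fun ω => (X ω, Y ω, Z ω))) := by
  unfold tripleCondInf
  rw [condEnt_decomp h0 X C, condEnt_decomp h0 Y C, condEnt_decomp h0 Z C,
    condEnt_decomp h0 (fun ω => (X ω, Y ω, Z ω)) C]
  have : ∑ k, Pr P (fun ω => C ω = k) *
          (ent (condPmf P (fun ω => C ω = k)) X + ent (condPmf P (fun ω => C ω = k)) Y
            + ent (condPmf P (fun ω => C ω = k)) Z
            - ent (condPmf P (fun ω => C ω = k)) (fun ω => (X ω, Y ω, Z ω)))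
      = ∑ k, (Pr P (fun ω => C ω = k) * ent (condPmf P (fun ω => C ω = k)) X
          + Pr P (fun ω => C ω = k) * ent (condPmf P (fun ω => C ω = k)) Y
          + Pr P (fun ω => C ω = k) * ent (condPmf P (fun ω => C ω = k)) Z
          - Pr P (fun ω => C ω = k) * ent (condPmf P (fun ω => C ω = k))
              (fun ω => (X ω, Y ω, Z ω))) :=
    Finset.sum_congr rfl fun k _ => by ring
  rw [this, Finset.sum_sub_distrib, Finset.sum_add_distrib, Finset.sum_add_distrib]

lemma ent_pair_comp_right {P : Ω → ℝ} (X : Ω → α) (C : Ω → κ) (f : κ → γ)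
    (hf : Function.Injective f) :
    ent P (fun ω => (X ω, f (C ω))) = ent P (fun ω => (X ω, C ω)) :=
  ent_comp_inj (fun ω => (X ω, C ω)) (fun p => (p.1, f p.2))
    (fun p q h => by
      obtain ⟨a, b⟩ := p; obtain ⟨a', b'⟩ := q
      simp_all [Prod.ext_iff, hf.eq_iff])

lemma condMutInf_comp_right {P : Ω → ℝ} (X : Ω → α) (Y : Ω → β) (C : Ω → κ) (f : κ → γ)
    (hf : Function.Injective f) :
    condMutInf P X Y (fun ω => f (C ω)) = condMutInf P X Y C := by
  unfold condMutInf
  rw [ent_pair_comp_right X C f hf]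
  rw [ent_pair_comp_right Y C f hf]
  rw [ent_comp_inj C f hf]
  rw [ent_pair_comp_right X (fun ω => (Y ω, C ω)) (fun p => (p.1, f p.2))
      (fun p q h => by
        obtain ⟨a, b⟩ := p; obtain ⟨a', b'⟩ := q
        simp_all [Prod.ext_iff, hf.eq_iff])]

lemma condEnt_comp_right {P : Ω → ℝ} (X : Ω → α) (C : Ω → κ) (f : κ → γ)
    (hf : Function.Injective f) :
    condEnt P X (fun ω => f (C ω)) = condEnt P X C := by
  unfold condEnt
  rw [ent_pair_comp_right X C f hf, ent_comp_inj C f hf]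

lemma tripleCondInf_comp_right {P : Ω → ℝ} (X : Ω → α) (Y : Ω → β) (Z : Ω → γ) (C : Ω → κ)
    (f : κ → δ) (hf : Function.Injective f) :
    tripleCondInf P X Y Z (fun ω => f (C ω)) = tripleCondInf P X Y Z C := by
  unfold tripleCondInf
  rw [condEnt_comp_right X C f hf, condEnt_comp_right Y C f hf, condEnt_comp_right Z C f hf,
    condEnt_comp_right (fun ω => (X ω, Y ω, Z ω)) C f hf]

end Lemmas2
section Lemmas3

open Finset

variable {Ω α β γ δ : Type*} [Fintype Ω] [Fintype α] [Fintype β] [Fintype γ] [Fintype δ]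

lemma mutInf_nonneg {P : Ω → ℝ} (hP : IsPMF P) (X : Ω → α) (Y : Ω → β) :
    0 ≤ mutInf P X Y := by
  set r : α → β → ℝ := fun v w => Pr P (fun ω => (X ω, Y ω) = (v, w)) with hr_def
  have hr0 : ∀ v w, 0 ≤ r v w := fun v w => Pr_nonneg hP.1 _
  set q : α → ℝ := fun v => ∑ w, r v w with hq_def
  set t : β → ℝ := fun w => ∑ v, r v w with ht_def
  have hq0 : ∀ v, 0 ≤ q v := fun v => Finset.sum_nonneg fun w _ => hr0 v w
  have ht0 : ∀ w, 0 ≤ t w := fun w => Finset.sum_nonneg fun v _ => hr0 v w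
  have hrq : ∀ v w, r v w ≤ q v := fun v w =>
    Finset.single_le_sum (fun w _ => hr0 v w) (Finset.mem_univ w)
  have hrt : ∀ v w, r v w ≤ t w := fun v w =>
    Finset.single_le_sum (fun v _ => hr0 v w) (Finset.mem_univ v)
  have hsumr : ∑ v, ∑ w, r v w = 1 := by
    have h1 := sum_Pr_fiber (P := P) (fun ω => (X ω, Y ω))
    rw [hP.2, Fintype.sum_prod_type] at h1
    exact h1
  have hsumq : ∑ v, q v = 1 := hsumr
  have hsumt : ∑ w, t w = 1 := by rw [ht_def]; rw [Finset.sum_comm] at hsumr; exact hsumr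
  have eX : ent P X = -∑ v, ∑ w, r v w * Real.logb 2 (q v) := by
    unfold ent
    congr 1
    refine Finset.sum_congr rfl fun v _ => ?_
    have hm : Pr P (fun ω => X ω = v) = q v := by
      rw [Pr_fiber_sum (fun ω => X ω = v) Y, hq_def]
      refine Finset.sum_congr rfl fun w _ => Pr_congr fun ω => by simp [Prod.ext_iff]
    rw [hm, Finset.sum_mul]
  have eY : ent P Y = -∑ v, ∑ w, r v w * Real.logb 2 (t w) := by
    unfold ent
    rw [Finset.sum_comm]
    congr 1
    refine Finset.sum_congr rfl fun w _ => ?_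
    have hm : Pr P (fun ω => Y ω = w) = t w := by
      rw [Pr_fiber_sum (fun ω => Y ω = w) X, ht_def]
      refine Finset.sum_congr rfl fun v _ => Pr_congr fun ω => by simp [Prod.ext_iff, and_comm]
    rw [hm, Finset.sum_mul]
  have epair : ent P (fun ω => (X ω, Y ω)) = -∑ v, ∑ w, r v w * Real.logb 2 (r v w) := by
    unfold ent
    rw [Fintype.sum_prod_type]
  have bound : ∀ v w, r v w * Real.logb 2 (q v) + r v w * Real.logb 2 (t w)
      - r v w * Real.logb 2 (r v w) ≤ (q v * t w - r v w) / Real.log 2 := by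
    intro v w
    have hlog2 : (0:ℝ) < Real.log 2 := Real.log_pos (by norm_num)
    by_cases hrz : r v w = 0
    · rw [hrz]
      simp only [zero_mul, add_zero, sub_zero, zero_add, zero_sub, neg_zero]
      exact div_nonneg (mul_nonneg (hq0 v) (ht0 w)) hlog2.le
    · have hrpos : 0 < r v w := lt_of_le_of_ne (hr0 v w) (Ne.symm hrz)
      have hqpos : 0 < q v := lt_of_lt_of_le hrpos (hrq v w)
      have htpos : 0 < t w := lt_of_lt_of_le hrpos (hrt v w)
      have hlog : Real.log (q v * t w / r v w) ≤ q v * t w / r v w - 1 :=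
        Real.log_le_sub_one_of_pos (by positivity)
      have hsplit : Real.log (q v * t w / r v w)
          = Real.log (q v) + Real.log (t w) - Real.log (r v w) := by
        rw [Real.log_div (by positivity) hrz, Real.log_mul (ne_of_gt hqpos) (ne_of_gt htpos)]
      have hmul : r v w * (Real.log (q v) + Real.log (t w) - Real.log (r v w))
          ≤ q v * t w - r v w := by
        rw [← hsplit]
        have := mul_le_mul_of_nonneg_left hlog (le_of_lt hrpos)
        calc r v w * Real.log (q v * t w / r v w) ≤ r v w * (q v * t w / r v w - 1) := this
          _ = q v * t w - r v w := by field_simp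
      simp only [Real.logb]
      calc r v w * (Real.log (q v) / Real.log 2) + r v w * (Real.log (t w) / Real.log 2)
            - r v w * (Real.log (r v w) / Real.log 2)
          = (r v w * (Real.log (q v) + Real.log (t w) - Real.log (r v w))) / Real.log 2 := by
            ring
        _ ≤ (q v * t w - r v w) / Real.log 2 := (div_le_div_iff_of_pos_right hlog2).mpr hmul
  have main : ∑ v, ∑ w, (r v w * Real.logb 2 (q v) + r v w * Real.logb 2 (t w)
      - r v w * Real.logb 2 (r v w)) ≤ 0 := by
    calc ∑ v, ∑ w, (r v w * Real.logb 2 (q v) + r v w * Real.logb 2 (t w)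
          - r v w * Real.logb 2 (r v w))
        ≤ ∑ v, ∑ w, (q v * t w - r v w) / Real.log 2 :=
          Finset.sum_le_sum fun v _ => Finset.sum_le_sum fun w _ => bound v w
      _ = ((∑ v, q v) * (∑ w, t w) - ∑ v, ∑ w, r v w) / Real.log 2 := by
          rw [Finset.sum_mul_sum]
          rw [← Finset.sum_sub_distrib]
          rw [Finset.sum_div]
          refine Finset.sum_congr rfl fun v _ => ?_
          rw [← Finset.sum_sub_distrib, Finset.sum_div]
      _ = 0 := by simp only [hsumq, hsumt, hsumr]; norm_num
  unfold mutInf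
  rw [eX, eY, epair]
  have expand : ∑ v, ∑ w, (r v w * Real.logb 2 (q v) + r v w * Real.logb 2 (t w)
      - r v w * Real.logb 2 (r v w))
      = ∑ v, ∑ w, r v w * Real.logb 2 (q v) + ∑ v, ∑ w, r v w * Real.logb 2 (t w)
        - ∑ v, ∑ w, r v w * Real.logb 2 (r v w) := by
    rw [← Finset.sum_add_distrib, ← Finset.sum_sub_distrib]
    refine Finset.sum_congr rfl fun v _ => ?_
    rw [← Finset.sum_add_distrib, ← Finset.sum_sub_distrib]
  rw [expand] at main
  linarith

lemma condEnt_nonneg {P : Ω → ℝ} (h0 : ∀ ω, 0 ≤ P ω) (X : Ω → α) (Y : Ω → β) :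
    0 ≤ condEnt P X Y := by
  set r : α → β → ℝ := fun v w => Pr P (fun ω => (X ω, Y ω) = (v, w)) with hr_def
  have hr0 : ∀ v w, 0 ≤ r v w := fun v w => Pr_nonneg h0 _
  set t : β → ℝ := fun w => ∑ v, r v w with ht_def
  have hrt : ∀ v w, r v w ≤ t w := fun v w =>
    Finset.single_le_sum (fun v _ => hr0 v w) (Finset.mem_univ v)
  have eY : ent P Y = -∑ v, ∑ w, r v w * Real.logb 2 (t w) := by
    unfold ent
    rw [Finset.sum_comm]
    congr 1
    refine Finset.sum_congr rfl fun w _ => ?_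
    have hm : Pr P (fun ω => Y ω = w) = t w := by
      rw [Pr_fiber_sum (fun ω => Y ω = w) X, ht_def]
      refine Finset.sum_congr rfl fun v _ => Pr_congr fun ω => by simp [Prod.ext_iff, and_comm]
    rw [hm, Finset.sum_mul]
  have epair : ent P (fun ω => (X ω, Y ω)) = -∑ v, ∑ w, r v w * Real.logb 2 (r v w) := by
    unfold ent
    rw [Fintype.sum_prod_type]
  unfold condEnt
  rw [eY, epair]
  have key : ∀ v w, r v w * Real.logb 2 (r v w) ≤ r v w * Real.logb 2 (t w) := by
    intro v w
    by_cases hrz : r v w = 0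
    · simp [hrz]
    · have hrpos : 0 < r v w := lt_of_le_of_ne (hr0 v w) (Ne.symm hrz)
      refine mul_le_mul_of_nonneg_left ?_ (le_of_lt hrpos)
      exact Real.logb_le_logb_of_le (by norm_num) hrpos (hrt v w)
  have : ∑ v, ∑ w, r v w * Real.logb 2 (r v w) ≤ ∑ v, ∑ w, r v w * Real.logb 2 (t w) :=
    Finset.sum_le_sum fun v _ => Finset.sum_le_sum fun w _ => key v w
  linarith

lemma condMutInf_nonneg {P : Ω → ℝ} (hP : IsPMF P) (X : Ω → α) (Y : Ω → β) (C : Ω → γ) :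
    0 ≤ condMutInf P X Y C := by
  rw [condMutInf_decomp hP.1 X Y C]
  refine Finset.sum_nonneg fun k _ => ?_
  rcases eq_or_ne (Pr P (fun ω => C ω = k)) 0 with h | h
  · simp [h]
  · exact mul_nonneg (Pr_nonneg hP.1 _) (mutInf_nonneg (condPmf_isPMF hP h) X Y)

end Lemmas3
section Lemmas4

open Finset

variable {Ω Ω' α β γ δ κ : Type*} [Fintype Ω] [Fintype Ω'] [Fintype α] [Fintype β] [Fintype γ]
  [Fintype δ] [Fintype κ]

lemma branch_ineq {P : Ω → ℝ} (hP : IsPMF P) (T : Ω → α) (B : Ω → β) (Z : Ω → γ) :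
    mutInf P T B + mutInf P Z B ≤ ent P B + mutInf P T Z := by
  have h1 : ent P (fun ω => (T ω, Z ω)) ≤ ent P (fun ω => (T ω, Z ω, B ω)) := by
    have hc := condEnt_nonneg hP.1 B (fun ω => (T ω, Z ω))
    unfold condEnt at hc
    have hre : ent P (fun ω => (B ω, (T ω, Z ω))) = ent P (fun ω => (T ω, Z ω, B ω)) :=
      (ent_comp_inj (fun ω => (B ω, (T ω, Z ω))) (fun p => (p.2.1, (p.2.2, p.1)))
        (fun p q h => by
          obtain ⟨a, b, c⟩ := p; obtain ⟨a', b', c'⟩ := q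
          simp_all [Prod.ext_iff])).symm
    rw [hre] at hc
    linarith
  have h2 := condMutInf_nonneg hP T Z B
  unfold condMutInf at h2
  unfold mutInf
  linarith

lemma triple_ineq {P : Ω → ℝ} (hP : IsPMF P) (A : Ω → α) (U : Ω → β) (Z : Ω → γ) :
    mutInf P U Z + mutInf P A Z
      ≤ ent P A + ent P U + ent P Z - ent P (fun ω => (A ω, U ω, Z ω)) := by
  have h := condMutInf_nonneg hP A U Z
  unfold condMutInf at h
  unfold mutInf
  linarith

lemma per_sigma {P : Ω → ℝ} (hP : IsPMF P) (ga gu gz gb0 gb1 : Ω → Bool) :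
    (1/2) * mutInf P gu gb1 + (1/2) * mutInf P ga gb0
      + ((1/2) * mutInf P gz gb1 + (1/2) * mutInf P gz gb0)
    ≤ (1/2) * (ent P ga + ent P gu + ent P gz - ent P (fun n => (ga n, gu n, gz n)))
      + ((1/2) * ent P gb1 + (1/2) * ent P gb0) := by
  have b1 := branch_ineq hP gu gb1 gz
  have b0 := branch_ineq hP ga gb0 gz
  have t := triple_ineq hP ga gu gz
  linarith

end Lemmas4
section Lemmas5

open Finset

variable {Ω Ω' α β γ δ κ : Type*} [Fintype Ω] [Fintype Ω'] [Fintype α] [Fintype β] [Fintype γ]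
  [Fintype δ] [Fintype κ]

lemma Pr_push {P : Ω → ℝ} (M : Ω → Ω') (Q : Ω' → Prop) :
    Pr P (fun ω => Q (M ω)) = Pr (fun m => Pr P (fun ω => M ω = m)) Q := by
  unfold Pr
  symm
  calc ∑ m, (if Q m then ∑ ω, (if M ω = m then P ω else 0) else 0)
      = ∑ m, ∑ ω, (if M ω = m then (if Q m then P ω else 0) else 0) := by
        refine Finset.sum_congr rfl fun m _ => ?_
        by_cases h : Q m <;> simp [h]
    _ = ∑ ω, ∑ m, (if M ω = m then (if Q m then P ω else 0) else 0) := Finset.sum_comm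
    _ = ∑ ω, (if Q (M ω) then P ω else 0) := by
        refine Finset.sum_congr rfl fun ω _ => ?_
        rw [Finset.sum_ite_eq]
        simp

lemma ent_push {P : Ω → ℝ} (M : Ω → Ω') (g : Ω' → α) :
    ent P (fun ω => g (M ω)) = ent (fun m => Pr P (fun ω => M ω = m)) g :=
  ent_congr fun v => Pr_push M (fun m => g m = v)

lemma Pr_condPmf_push {P : Ω → ℝ} (M : Ω → Ω') (E : Ω' → Prop) (Q : Ω' → Prop) :
    Pr (condPmf P (fun ω => E (M ω))) (fun ω => Q (M ω))
      = Pr (condPmf (fun m => Pr P (fun ω => M ω = m)) E) Q := by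
  rw [Pr_condPmf, Pr_condPmf]
  congr 1
  · exact Pr_push M (fun m => Q m ∧ E m)
  · exact Pr_push M E

lemma ent_condPmf_push {P : Ω → ℝ} (M : Ω → Ω') (E : Ω' → Prop) (g : Ω' → α) :
    ent (condPmf P (fun ω => E (M ω))) (fun ω => g (M ω))
      = ent (condPmf (fun m => Pr P (fun ω => M ω = m)) E) g :=
  ent_congr fun v => Pr_condPmf_push M E (fun m => g m = v)

lemma condMutInf_push {P : Ω → ℝ} (M : Ω → Ω') (g1 : Ω' → α) (g2 : Ω' → β) (g3 : Ω' → γ) :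
    condMutInf P (fun ω => g1 (M ω)) (fun ω => g2 (M ω)) (fun ω => g3 (M ω))
      = condMutInf (fun m => Pr P (fun ω => M ω = m)) g1 g2 g3 := by
  have e1 : ent P (fun ω => (g1 (M ω), g3 (M ω)))
      = ent (fun m => Pr P (fun ω => M ω = m)) (fun m => (g1 m, g3 m)) :=
    ent_push M (fun m => (g1 m, g3 m))
  have e2 : ent P (fun ω => (g2 (M ω), g3 (M ω)))
      = ent (fun m => Pr P (fun ω => M ω = m)) (fun m => (g2 m, g3 m)) :=
    ent_push M (fun m => (g2 m, g3 m))
  have e3 : ent P (fun ω => (g1 (M ω), g2 (M ω), g3 (M ω)))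
      = ent (fun m => Pr P (fun ω => M ω = m)) (fun m => (g1 m, g2 m, g3 m)) :=
    ent_push M (fun m => (g1 m, g2 m, g3 m))
  have e4 : ent P (fun ω => g3 (M ω)) = ent (fun m => Pr P (fun ω => M ω = m)) g3 :=
    ent_push M g3
  unfold condMutInf
  rw [← e1, ← e2, ← e3, ← e4]

lemma condMutInf_condPmf_push {P : Ω → ℝ} (M : Ω → Ω') (E : Ω' → Prop)
    (g1 : Ω' → α) (g2 : Ω' → β) (g3 : Ω' → γ) :
    condMutInf (condPmf P (fun ω => E (M ω)))
        (fun ω => g1 (M ω)) (fun ω => g2 (M ω)) (fun ω => g3 (M ω))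
      = condMutInf (condPmf (fun m => Pr P (fun ω => M ω = m)) E) g1 g2 g3 := by
  have e1 : ent (condPmf P (fun ω => E (M ω))) (fun ω => (g1 (M ω), g3 (M ω)))
      = ent (condPmf (fun m => Pr P (fun ω => M ω = m)) E) (fun m => (g1 m, g3 m)) :=
    ent_condPmf_push M E (fun m => (g1 m, g3 m))
  have e2 : ent (condPmf P (fun ω => E (M ω))) (fun ω => (g2 (M ω), g3 (M ω)))
      = ent (condPmf (fun m => Pr P (fun ω => M ω = m)) E) (fun m => (g2 m, g3 m)) :=
    ent_condPmf_push M E (fun m => (g2 m, g3 m))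
  have e3 : ent (condPmf P (fun ω => E (M ω))) (fun ω => (g1 (M ω), g2 (M ω), g3 (M ω)))
      = ent (condPmf (fun m => Pr P (fun ω => M ω = m)) E) (fun m => (g1 m, g2 m, g3 m)) :=
    ent_condPmf_push M E (fun m => (g1 m, g2 m, g3 m))
  have e4 : ent (condPmf P (fun ω => E (M ω))) (fun ω => g3 (M ω))
      = ent (condPmf (fun m => Pr P (fun ω => M ω = m)) E) g3 :=
    ent_condPmf_push M E g3
  unfold condMutInf
  rw [← e1, ← e2, ← e3, ← e4]

lemma condEnt_push {P : Ω → ℝ} (M : Ω → Ω') (g1 : Ω' → α) (g3 : Ω' → γ) :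
    condEnt P (fun ω => g1 (M ω)) (fun ω => g3 (M ω))
      = condEnt (fun m => Pr P (fun ω => M ω = m)) g1 g3 := by
  have e1 : ent P (fun ω => (g1 (M ω), g3 (M ω)))
      = ent (fun m => Pr P (fun ω => M ω = m)) (fun m => (g1 m, g3 m)) :=
    ent_push M (fun m => (g1 m, g3 m))
  have e4 : ent P (fun ω => g3 (M ω)) = ent (fun m => Pr P (fun ω => M ω = m)) g3 :=
    ent_push M g3
  unfold condEnt
  rw [← e1, ← e4]

lemma tripleCondInf_push {P : Ω → ℝ} (M : Ω → Ω') (g1 : Ω' → α) (g2 : Ω' → β) (g3 : Ω' → γ)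
    (g4 : Ω' → δ) :
    tripleCondInf P (fun ω => g1 (M ω)) (fun ω => g2 (M ω)) (fun ω => g3 (M ω))
        (fun ω => g4 (M ω))
      = tripleCondInf (fun m => Pr P (fun ω => M ω = m)) g1 g2 g3 g4 := by
  have e1 := condEnt_push (P := P) M g1 g4
  have e2 := condEnt_push (P := P) M g2 g4
  have e3 := condEnt_push (P := P) M g3 g4
  have e4 : condEnt P (fun ω => (g1 (M ω), g2 (M ω), g3 (M ω))) (fun ω => g4 (M ω))
      = condEnt (fun m => Pr P (fun ω => M ω = m)) (fun m => (g1 m, g2 m, g3 m)) g4 :=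
    condEnt_push M (fun m => (g1 m, g2 m, g3 m)) g4
  unfold tripleCondInf
  rw [← e1, ← e2, ← e3, ← e4]

lemma condMutInf_congr_right_support {P : Ω → ℝ} (X : Ω → α) (Y : Ω → β) {C C' : Ω → κ}
    (h : ∀ ω, P ω ≠ 0 → C ω = C' ω) :
    condMutInf P X Y C = condMutInf P X Y C' := by
  have e1 : ent P (fun ω => (X ω, C ω)) = ent P (fun ω => (X ω, C' ω)) :=
    ent_support_congr fun ω hω => by rw [h ω hω]
  have e2 : ent P (fun ω => (Y ω, C ω)) = ent P (fun ω => (Y ω, C' ω)) :=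
    ent_support_congr fun ω hω => by rw [h ω hω]
  have e3 : ent P (fun ω => (X ω, Y ω, C ω)) = ent P (fun ω => (X ω, Y ω, C' ω)) :=
    ent_support_congr fun ω hω => by rw [h ω hω]
  have e4 : ent P C = ent P C' := ent_support_congr h
  unfold condMutInf
  rw [e1, e2, e3, e4]

lemma mutInf_push {P : Ω → ℝ} (M : Ω → Ω') (g1 : Ω' → α) (g2 : Ω' → β) :
    mutInf P (fun ω => g1 (M ω)) (fun ω => g2 (M ω))
      = mutInf (fun m => Pr P (fun ω => M ω = m)) g1 g2 := by
  have e1 := ent_push (P := P) M g1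
  have e2 := ent_push (P := P) M g2
  have e3 : ent P (fun ω => (g1 (M ω), g2 (M ω)))
      = ent (fun m => Pr P (fun ω => M ω = m)) (fun m => (g1 m, g2 m)) :=
    ent_push M (fun m => (g1 m, g2 m))
  unfold mutInf
  rw [← e1, ← e2, ← e3]

lemma mutInf_support_congr {P : Ω → ℝ} {X X' : Ω → α} {Y Y' : Ω → β}
    (h1 : ∀ ω, P ω ≠ 0 → X ω = X' ω) (h2 : ∀ ω, P ω ≠ 0 → Y ω = Y' ω) :
    mutInf P X Y = mutInf P X' Y' := by
  have e1 : ent P X = ent P X' := ent_support_congr h1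
  have e2 : ent P Y = ent P Y' := ent_support_congr h2
  have e3 : ent P (fun ω => (X ω, Y ω)) = ent P (fun ω => (X' ω, Y' ω)) :=
    ent_support_congr fun ω hω => by rw [h1 ω hω, h2 ω hω]
  unfold mutInf
  rw [e1, e2, e3]

lemma mutInf_comp_push {P : Ω → ℝ} (R : Ω → κ) (P₂ : κ → ℝ)
    (hp : ∀ n, Pr P (fun ω => R ω = n) = P₂ n) (g1 : κ → α) (g2 : κ → β) :
    mutInf P (fun ω => g1 (R ω)) (fun ω => g2 (R ω)) = mutInf P₂ g1 g2 := by
  rw [mutInf_push R g1 g2]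
  have : (fun m => Pr P (fun ω => R ω = m)) = P₂ := funext hp
  rw [this]

lemma ent_comp_push {P : Ω → ℝ} (R : Ω → κ) (P₂ : κ → ℝ)
    (hp : ∀ n, Pr P (fun ω => R ω = n) = P₂ n) (g : κ → α) :
    ent P (fun ω => g (R ω)) = ent P₂ g := by
  rw [ent_push R g]
  have : (fun m => Pr P (fun ω => R ω = m)) = P₂ := funext hp
  rw [this]

end Lemmas5
section Aux

open Finset

/-- Per-σ model functions on `Bool × Bool` (values of `(x,z)`). -/
def gA' {S : Type*} (A : Bool × Bool × S → Bool) (σ : S) : Bool × Bool → Bool :=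
  fun n => A (n.1, n.2, σ)

def gU' {S : Type*} (A : Bool × Bool × S → Bool) (σ : S) : Bool × Bool → Bool :=
  fun n => xor (A (n.1, n.2, σ)) n.1

def gBw' {S : Type*} (F0 F1 : Bool × Bool × S → Bool) (σ : S) (w : Bool) : Bool × Bool → Bool :=
  fun n => if w then F1 (n.1, n.2, σ) else F0 (n.1, n.2, σ)

def gZ' : Bool × Bool → Bool := fun n => n.2

noncomputable def UU : Bool × Bool → ℝ := fun _ => 1/4

lemma UU_isPMF : IsPMF UU := by
  constructor
  · intro ω; unfold UU; norm_num
  · unfold UU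
    rw [Fintype.sum_prod_type]
    simp [Fintype.sum_bool]
    norm_num

lemma combo_le {S : Type*} [Fintype S] (f1 f2 f3 f4 f5 : S → ℝ)
    (h : ∀ σ, (1/2) * f1 σ + (1/2) * f2 σ + f3 σ ≤ (1/2) * f4 σ + f5 σ) :
    (1/2) * (∑ σ, f1 σ) + (1/2) * (∑ σ, f2 σ) + (∑ σ, f3 σ)
      ≤ (1/2) * (∑ σ, f4 σ) + (∑ σ, f5 σ) := by
  simp only [Finset.mul_sum, ← Finset.sum_add_distrib]
  exact Finset.sum_le_sum fun σ _ => h σ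

set_option maxHeartbeats 2000000 in
theorem main_aux {S : Type*} [Fintype S] (p : S → ℝ) (hp0 : ∀ σ, 0 ≤ p σ)
    (hp1 : ∑ σ, p σ = 1)
    (A F0 F1 : Bool × Bool × S → Bool) (G : Bool × S → Bool)
    (q : Bool × Bool × Bool × S → ℝ) (hq : ∀ m, q m = p m.2.2.2 / 8) :
    (1/2) * condMutInf (condPmf q (fun m => m.2.1 = true))
        (fun m => xor (A (m.1, m.2.2.1, m.2.2.2)) m.1)
        (fun m => if G (m.2.1, m.2.2.2) then F1 (m.1, m.2.2.1, m.2.2.2)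
          else F0 (m.1, m.2.2.1, m.2.2.2))
        (fun m => (G (m.2.1, m.2.2.2), m.2.2.2))
      + (1/2) * condMutInf (condPmf q (fun m => m.2.1 = false))
          (fun m => A (m.1, m.2.2.1, m.2.2.2))
          (fun m => if G (m.2.1, m.2.2.2) then F1 (m.1, m.2.2.1, m.2.2.2)
            else F0 (m.1, m.2.2.1, m.2.2.2))
          (fun m => (G (m.2.1, m.2.2.2), m.2.2.2))
      + condMutInf q (fun m => m.2.2.1)
          (fun m => if G (m.2.1, m.2.2.2) then F1 (m.1, m.2.2.1, m.2.2.2)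
            else F0 (m.1, m.2.2.1, m.2.2.2))
          (fun m => (G (m.2.1, m.2.2.2), m.2.2.2, m.2.1))
    ≤ (1/2) * tripleCondInf q (fun m => A (m.1, m.2.2.1, m.2.2.2))
          (fun m => xor (A (m.1, m.2.2.1, m.2.2.2)) m.1)
          (fun m => m.2.2.1)
          (fun m => (G (m.2.1, m.2.2.2), m.2.2.2))
      + condEnt q
          (fun m => if G (m.2.1, m.2.2.2) then F1 (m.1, m.2.2.1, m.2.2.2)
            else F0 (m.1, m.2.2.1, m.2.2.2))
          (fun m => (G (m.2.1, m.2.2.2), m.2.2.2, m.2.1)) := by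
  have hq0 : ∀ m, 0 ≤ q m := fun m => by
    rw [hq m]; exact div_nonneg (hp0 _) (by norm_num)
  ----------------------------------------------------------------
  -- probability computations
  ----------------------------------------------------------------
  have PrY : ∀ c, Pr q (fun m => m.2.1 = c) = 1/2 := by
    intro c
    unfold Pr
    simp only [hq, Fintype.sum_prod_type, Fintype.sum_bool]
    cases c <;> simp <;> rw [← Finset.sum_div, hp1] <;> norm_num
  have PrSY : ∀ σ c, Pr q (fun m => m.2.2.2 = σ ∧ m.2.1 = c) = p σ / 2 := by
    intro σ c
    unfold Pr
    simp only [hq, Fintype.sum_prod_type, Fintype.sum_bool]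
    cases c <;> simp [Finset.sum_ite_eq, Finset.sum_ite_eq'] <;> ring
  have PrK : ∀ σ c, Pr q (fun m => ((m.2.2.2, m.2.1) : S × Bool) = (σ, c)) = p σ / 2 := by
    intro σ c
    rw [Pr_congr (F := fun m => m.2.2.2 = σ ∧ m.2.1 = c) (fun m => by
      constructor
      · intro h; simp only [Prod.mk.injEq] at h; exact h
      · intro h; simp only [Prod.mk.injEq]; exact h)]
    exact PrSY σ c
  have PrXZK : ∀ σ c (n : Bool × Bool),
      Pr q (fun m => ((m.1, m.2.2.1) : Bool × Bool) = n
        ∧ ((m.2.2.2, m.2.1) : S × Bool) = (σ, c)) = p σ / 8 := by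
    intro σ c n
    obtain ⟨n1, n2⟩ := n
    unfold Pr
    simp only [hq, Fintype.sum_prod_type, Fintype.sum_bool, Prod.mk.injEq]
    cases c <;> cases n1 <;> cases n2 <;>
      simp [Finset.sum_ite_eq, Finset.sum_ite_eq'] <;> ring
  have PrXZW : ∀ (w : Bool) σ (n : Bool × Bool),
      Pr q (fun m => ((m.1, m.2.2.1) : Bool × Bool) = n
        ∧ ((G (m.2.1, m.2.2.2), m.2.2.2) : Bool × S) = (w, σ))
      = ((if G (true, σ) = w then (1:ℝ) else 0) + (if G (false, σ) = w then 1 else 0))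
          * (p σ / 8) := by
    intro w σ n
    rw [Pr_congr (F := fun m => m.2.2.2 = σ ∧ ((m.1, m.2.2.1) : Bool × Bool) = n
        ∧ G (m.2.1, σ) = w) (fun m => by
      constructor
      · rintro ⟨hn, hW⟩
        simp only [Prod.mk.injEq] at hW
        exact ⟨hW.2, hn, by rw [← hW.2]; exact hW.1⟩
      · rintro ⟨h2, hn, h1⟩
        exact ⟨hn, by simp only [Prod.mk.injEq]; exact ⟨by rw [h2]; exact h1, h2⟩⟩)]
    obtain ⟨n1, n2⟩ := n
    unfold Pr
    simp only [hq, Fintype.sum_prod_type, Fintype.sum_bool, Prod.mk.injEq]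
    by_cases hg1 : G (true, σ) = w <;> by_cases hg2 : G (false, σ) = w <;>
      cases n1 <;> cases n2 <;>
      simp [hg1, hg2, Finset.sum_ite_eq, Finset.sum_ite_eq'] <;> ring
  have PrW : ∀ (w : Bool) σ,
      Pr q (fun m => ((G (m.2.1, m.2.2.2), m.2.2.2) : Bool × S) = (w, σ))
      = ((if G (true, σ) = w then (1:ℝ) else 0) + (if G (false, σ) = w then 1 else 0))
          * (p σ / 2) := by
    intro w σ
    rw [Pr_congr (F := fun m => m.2.2.2 = σ ∧ G (m.2.1, σ) = w) (fun m => by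
      constructor
      · rintro hW
        simp only [Prod.mk.injEq] at hW
        exact ⟨hW.2, by rw [← hW.2]; exact hW.1⟩
      · rintro ⟨h2, h1⟩
        simp only [Prod.mk.injEq]
        exact ⟨by rw [h2]; exact h1, h2⟩)]
    unfold Pr
    simp only [hq, Fintype.sum_prod_type, Fintype.sum_bool, Prod.mk.injEq]
    by_cases hg1 : G (true, σ) = w <;> by_cases hg2 : G (false, σ) = w <;>
      simp [hg1, hg2, Finset.sum_ite_eq, Finset.sum_ite_eq'] <;> ring
  ----------------------------------------------------------------
  -- support lemmas
  ----------------------------------------------------------------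
  have suppQ : ∀ σ c m, condPmf q (fun m' => ((m'.2.2.2, m'.2.1) : S × Bool) = (σ, c)) m ≠ 0 →
      m.2.2.2 = σ ∧ m.2.1 = c := by
    intro σ c m hm
    rw [condPmf_apply] at hm
    by_cases h : ((m.2.2.2, m.2.1) : S × Bool) = (σ, c)
    · simp only [Prod.mk.injEq] at h; exact h
    · simp [h] at hm
  have suppY : ∀ c m, condPmf q (fun m' => m'.2.1 = c) m ≠ 0 → m.2.1 = c := by
    intro c m hm
    rw [condPmf_apply] at hm
    by_cases h : m.2.1 = c
    · exact h
    · simp [h] at hm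
  have suppW : ∀ (w : Bool) σ m,
      condPmf q (fun m' => ((G (m'.2.1, m'.2.2.2), m'.2.2.2) : Bool × S) = (w, σ)) m ≠ 0 →
      m.2.2.2 = σ := by
    intro w σ m hm
    rw [condPmf_apply] at hm
    by_cases h : ((G (m.2.1, m.2.2.2), m.2.2.2) : Bool × S) = (w, σ)
    · simp only [Prod.mk.injEq] at h; exact h.2
    · simp [h] at hm
  ----------------------------------------------------------------
  -- cell pushforward lemmas
  ----------------------------------------------------------------
  have cellQPr : ∀ σ c, p σ ≠ 0 → ∀ n : Bool × Bool,
      Pr (condPmf q (fun m => ((m.2.2.2, m.2.1) : S × Bool) = (σ, c)))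
        (fun m => ((m.1, m.2.2.1) : Bool × Bool) = n) = UU n := by
    intro σ c hσ n
    have step : Pr (condPmf q (fun m => ((m.2.2.2, m.2.1) : S × Bool) = (σ, c)))
        (fun m => ((m.1, m.2.2.1) : Bool × Bool) = n) = (p σ / 8) / (p σ / 2) := by
      rw [Pr_condPmf]
      congr 1
      · exact PrXZK σ c n
      · exact PrK σ c
    rw [step]
    unfold UU
    field_simp
    ring
  have cellRPr : ∀ (w : Bool) σ,
      Pr q (fun m => ((G (m.2.1, m.2.2.2), m.2.2.2) : Bool × S) = (w, σ)) ≠ 0 →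
      ∀ n : Bool × Bool,
      Pr (condPmf q (fun m => ((G (m.2.1, m.2.2.2), m.2.2.2) : Bool × S) = (w, σ)))
        (fun m => ((m.1, m.2.2.1) : Bool × Bool) = n) = UU n := by
    intro w σ hw n
    have hNp := hw
    rw [PrW w σ] at hNp
    obtain ⟨hN, hp2⟩ := mul_ne_zero_iff.mp hNp
    have hpσ : p σ ≠ 0 := fun h => hp2 (by rw [h]; ring)
    have step : Pr (condPmf q (fun m => ((G (m.2.1, m.2.2.2), m.2.2.2) : Bool × S) = (w, σ)))
        (fun m => ((m.1, m.2.2.1) : Bool × Bool) = n)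
        = (((if G (true, σ) = w then (1:ℝ) else 0) + (if G (false, σ) = w then 1 else 0))
            * (p σ / 8))
          / (((if G (true, σ) = w then (1:ℝ) else 0) + (if G (false, σ) = w then 1 else 0))
            * (p σ / 2)) := by
      rw [Pr_condPmf]
      congr 1
      · exact PrXZW w σ n
      · exact PrW w σ
    rw [step]
    unfold UU
    field_simp
    ring
  ----------------------------------------------------------------
  -- per-cell identifications
  ----------------------------------------------------------------
  have cellMut : ∀ σ c, p σ ≠ 0 → ∀ (T : Bool × Bool × Bool × S → Bool)
      (gT : Bool × Bool → Bool),
      (∀ m : Bool × Bool × Bool × S, m.2.2.2 = σ → m.2.1 = c → T m = gT (m.1, m.2.2.1)) →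
      mutInf (condPmf q (fun m => ((m.2.2.2, m.2.1) : S × Bool) = (σ, c))) T
          (fun m => if G (m.2.1, m.2.2.2) then F1 (m.1, m.2.2.1, m.2.2.2)
            else F0 (m.1, m.2.2.1, m.2.2.2))
        = mutInf UU gT (gBw' F0 F1 σ (G (c, σ))) := by
    intro σ c hσ T gT hT
    have s1 : mutInf (condPmf q (fun m => ((m.2.2.2, m.2.1) : S × Bool) = (σ, c))) T
        (fun m => if G (m.2.1, m.2.2.2) then F1 (m.1, m.2.2.1, m.2.2.2)
          else F0 (m.1, m.2.2.1, m.2.2.2))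
        = mutInf (condPmf q (fun m => ((m.2.2.2, m.2.1) : S × Bool) = (σ, c)))
            (fun m => gT (m.1, m.2.2.1))
            (fun m => gBw' F0 F1 σ (G (c, σ)) (m.1, m.2.2.1)) :=
      mutInf_support_congr
        (fun m hm => hT m (suppQ σ c m hm).1 (suppQ σ c m hm).2)
        (fun m hm => by
          obtain ⟨h1, h2⟩ := suppQ σ c m hm
          show (if G (m.2.1, m.2.2.2) then F1 (m.1, m.2.2.1, m.2.2.2)
            else F0 (m.1, m.2.2.1, m.2.2.2)) = _
          rw [h1, h2]
          rfl)
    rw [s1]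
    exact mutInf_comp_push
      (P := condPmf q (fun m => ((m.2.2.2, m.2.1) : S × Bool) = (σ, c)))
      (fun m => ((m.1, m.2.2.1) : Bool × Bool)) UU (cellQPr σ c hσ)
      gT (gBw' F0 F1 σ (G (c, σ)))
  have cellEntQ : ∀ σ c, p σ ≠ 0 →
      ent (condPmf q (fun m => ((m.2.2.2, m.2.1) : S × Bool) = (σ, c)))
          (fun m => if G (m.2.1, m.2.2.2) then F1 (m.1, m.2.2.1, m.2.2.2)
            else F0 (m.1, m.2.2.1, m.2.2.2))
        = ent UU (gBw' F0 F1 σ (G (c, σ))) := by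
    intro σ c hσ
    have s1 : ent (condPmf q (fun m => ((m.2.2.2, m.2.1) : S × Bool) = (σ, c)))
        (fun m => if G (m.2.1, m.2.2.2) then F1 (m.1, m.2.2.1, m.2.2.2)
          else F0 (m.1, m.2.2.1, m.2.2.2))
        = ent (condPmf q (fun m => ((m.2.2.2, m.2.1) : S × Bool) = (σ, c)))
            (fun m => gBw' F0 F1 σ (G (c, σ)) (m.1, m.2.2.1)) :=
      ent_support_congr (fun m hm => by
        obtain ⟨h1, h2⟩ := suppQ σ c m hm
        show (if G (m.2.1, m.2.2.2) then F1 (m.1, m.2.2.1, m.2.2.2)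
          else F0 (m.1, m.2.2.1, m.2.2.2)) = _
        rw [h1, h2]
        rfl)
    rw [s1]
    exact ent_comp_push
      (P := condPmf q (fun m => ((m.2.2.2, m.2.1) : S × Bool) = (σ, c)))
      (fun m => ((m.1, m.2.2.1) : Bool × Bool)) UU (cellQPr σ c hσ)
      (gBw' F0 F1 σ (G (c, σ)))
  have cellEntR : ∀ (w : Bool) σ,
      Pr q (fun m => ((G (m.2.1, m.2.2.2), m.2.2.2) : Bool × S) = (w, σ)) ≠ 0 →
      ∀ {κ : Type} [Fintype κ] (T : Bool × Bool × Bool × S → κ) (gT : Bool × Bool → κ),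
      (∀ m : Bool × Bool × Bool × S, m.2.2.2 = σ → T m = gT (m.1, m.2.2.1)) →
      ent (condPmf q (fun m => ((G (m.2.1, m.2.2.2), m.2.2.2) : Bool × S) = (w, σ))) T
        = ent UU gT := by
    intro w σ hw κ _ T gT hT
    have s1 : ent (condPmf q
          (fun m => ((G (m.2.1, m.2.2.2), m.2.2.2) : Bool × S) = (w, σ))) T
        = ent (condPmf q (fun m => ((G (m.2.1, m.2.2.2), m.2.2.2) : Bool × S) = (w, σ)))
            (fun m => gT (m.1, m.2.2.1)) :=
      ent_support_congr (fun m hm => hT m (suppW w σ m hm))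
    rw [s1]
    exact ent_comp_push
      (P := condPmf q (fun m => ((G (m.2.1, m.2.2.2), m.2.2.2) : Bool × S) = (w, σ)))
      (fun m => ((m.1, m.2.2.1) : Bool × Bool)) UU (cellRPr w σ hw) gT
  ----------------------------------------------------------------
  -- injectivity facts
  ----------------------------------------------------------------
  have hinjWc : ∀ c : Bool, Function.Injective (fun σ : S => ((G (c, σ), σ) : Bool × S)) := by
    intro c σ σ' h
    exact congrArg Prod.snd h
  have hinjV : Function.Injective
      (fun k : S × Bool => ((G (k.2, k.1), k.1, k.2) : Bool × S × Bool)) := by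
    intro k k' h
    simp only [Prod.mk.injEq] at h
    exact Prod.ext h.2.1 h.2.2
  ----------------------------------------------------------------
  -- terms 1 and 2
  ----------------------------------------------------------------
  have eT : ∀ (c : Bool) (T : Bool × Bool × Bool × S → Bool) (gT : S → Bool × Bool → Bool),
      (∀ σ (m : Bool × Bool × Bool × S), m.2.2.2 = σ → m.2.1 = c → T m = gT σ (m.1, m.2.2.1)) →
      condMutInf (condPmf q (fun m => m.2.1 = c)) T
          (fun m => if G (m.2.1, m.2.2.2) then F1 (m.1, m.2.2.1, m.2.2.2)
            else F0 (m.1, m.2.2.1, m.2.2.2))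
          (fun m => (G (m.2.1, m.2.2.2), m.2.2.2))
        = ∑ σ, p σ * mutInf UU (gT σ) (gBw' F0 F1 σ (G (c, σ))) := by
    intro c T gT hT
    have h0c : ∀ m, 0 ≤ condPmf q (fun m' => m'.2.1 = c) m := condPmf_nonneg hq0 _
    have st1 : condMutInf (condPmf q (fun m => m.2.1 = c)) T
          (fun m => if G (m.2.1, m.2.2.2) then F1 (m.1, m.2.2.1, m.2.2.2)
            else F0 (m.1, m.2.2.1, m.2.2.2))
          (fun m => (G (m.2.1, m.2.2.2), m.2.2.2))
        = condMutInf (condPmf q (fun m => m.2.1 = c)) T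
            (fun m => if G (m.2.1, m.2.2.2) then F1 (m.1, m.2.2.1, m.2.2.2)
              else F0 (m.1, m.2.2.1, m.2.2.2))
            (fun m => ((G (c, m.2.2.2), m.2.2.2) : Bool × S)) :=
      condMutInf_congr_right_support _ _ (fun m hm => by rw [suppY c m hm])
    have st2 : condMutInf (condPmf q (fun m => m.2.1 = c)) T
            (fun m => if G (m.2.1, m.2.2.2) then F1 (m.1, m.2.2.1, m.2.2.2)
              else F0 (m.1, m.2.2.1, m.2.2.2))
            (fun m => ((G (c, m.2.2.2), m.2.2.2) : Bool × S))
        = condMutInf (condPmf q (fun m => m.2.1 = c)) T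
            (fun m => if G (m.2.1, m.2.2.2) then F1 (m.1, m.2.2.1, m.2.2.2)
              else F0 (m.1, m.2.2.1, m.2.2.2))
            (fun m => m.2.2.2) :=
      condMutInf_comp_right (P := condPmf q (fun m => m.2.1 = c)) _ _ (fun m => m.2.2.2)
        (fun σ => ((G (c, σ), σ) : Bool × S)) (hinjWc c)
    rw [st1, st2, condMutInf_decomp h0c]
    beta_reduce
    refine Finset.sum_congr rfl fun σ _ => ?_
    have hmeas : condPmf (condPmf q (fun m => m.2.1 = c)) (fun m => m.2.2.2 = σ)
        = condPmf q (fun m => ((m.2.2.2, m.2.1) : S × Bool) = (σ, c)) := by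
      rw [condPmf_condPmf hq0]
      exact condPmf_congr (fun m => by
        constructor
        · rintro ⟨h1, h2⟩; simp only [Prod.mk.injEq]; exact ⟨h2, h1⟩
        · intro h; simp only [Prod.mk.injEq] at h; exact ⟨h.2, h.1⟩)
    have hco : Pr (condPmf q (fun m => m.2.1 = c)) (fun m => m.2.2.2 = σ) = p σ := by
      have step : Pr (condPmf q (fun m => m.2.1 = c)) (fun m => m.2.2.2 = σ)
          = (p σ / 2) / (1 / 2) := by
        rw [Pr_condPmf]
        congr 1
        · exact PrSY σ c
        · exact PrY c
      rw [step]
      ring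
    rw [hco, hmeas]
    rcases eq_or_ne (p σ) 0 with h0 | h0
    · rw [h0]; simp
    · rw [cellMut σ c h0 T (gT σ) (fun m h1 h2 => hT σ m h1 h2)]
  have e1 : condMutInf (condPmf q (fun m => m.2.1 = true))
        (fun m => xor (A (m.1, m.2.2.1, m.2.2.2)) m.1)
        (fun m => if G (m.2.1, m.2.2.2) then F1 (m.1, m.2.2.1, m.2.2.2)
          else F0 (m.1, m.2.2.1, m.2.2.2))
        (fun m => (G (m.2.1, m.2.2.2), m.2.2.2))
      = ∑ σ, p σ * mutInf UU (gU' A σ) (gBw' F0 F1 σ (G (true, σ))) :=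
    eT true _ (fun σ => gU' A σ) (fun σ m h1 _ => by rw [h1]; rfl)
  have e0 : condMutInf (condPmf q (fun m => m.2.1 = false))
        (fun m => A (m.1, m.2.2.1, m.2.2.2))
        (fun m => if G (m.2.1, m.2.2.2) then F1 (m.1, m.2.2.1, m.2.2.2)
          else F0 (m.1, m.2.2.1, m.2.2.2))
        (fun m => (G (m.2.1, m.2.2.2), m.2.2.2))
      = ∑ σ, p σ * mutInf UU (gA' A σ) (gBw' F0 F1 σ (G (false, σ))) :=
    eT false _ (fun σ => gA' A σ) (fun σ m h1 _ => by rw [h1]; rfl)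
  ----------------------------------------------------------------
  -- term 3
  ----------------------------------------------------------------
  have eV : condMutInf q (fun m => m.2.2.1)
        (fun m => if G (m.2.1, m.2.2.2) then F1 (m.1, m.2.2.1, m.2.2.2)
          else F0 (m.1, m.2.2.1, m.2.2.2))
        (fun m => (G (m.2.1, m.2.2.2), m.2.2.2, m.2.1))
      = condMutInf q (fun m => m.2.2.1)
          (fun m => if G (m.2.1, m.2.2.2) then F1 (m.1, m.2.2.1, m.2.2.2)
            else F0 (m.1, m.2.2.1, m.2.2.2))
          (fun m => ((m.2.2.2, m.2.1) : S × Bool)) :=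
    condMutInf_comp_right (P := q) _ _ (fun m => ((m.2.2.2, m.2.1) : S × Bool))
      (fun k => ((G (k.2, k.1), k.1, k.2) : Bool × S × Bool)) hinjV
  have e3 : condMutInf q (fun m => m.2.2.1)
        (fun m => if G (m.2.1, m.2.2.2) then F1 (m.1, m.2.2.1, m.2.2.2)
          else F0 (m.1, m.2.2.1, m.2.2.2))
        (fun m => (G (m.2.1, m.2.2.2), m.2.2.2, m.2.1))
      = ∑ σ, ((p σ / 2) * mutInf UU gZ' (gBw' F0 F1 σ (G (true, σ)))
          + (p σ / 2) * mutInf UU gZ' (gBw' F0 F1 σ (G (false, σ)))) := by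
    rw [eV, condMutInf_decomp hq0]
    beta_reduce
    simp only [Fintype.sum_prod_type, Fintype.sum_bool]
    refine Finset.sum_congr rfl fun σ _ => ?_
    congr 1
    · rw [PrK σ true]
      rcases eq_or_ne (p σ) 0 with h0 | h0
      · rw [h0]; norm_num
      · rw [cellMut σ true h0 (fun m => m.2.2.1) gZ' (fun m _ _ => rfl)]
    · rw [PrK σ false]
      rcases eq_or_ne (p σ) 0 with h0 | h0
      · rw [h0]; norm_num
      · rw [cellMut σ false h0 (fun m => m.2.2.1) gZ' (fun m _ _ => rfl)]
  ----------------------------------------------------------------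
  -- entropy term
  ----------------------------------------------------------------
  have eVH : condEnt q
        (fun m => if G (m.2.1, m.2.2.2) then F1 (m.1, m.2.2.1, m.2.2.2)
          else F0 (m.1, m.2.2.1, m.2.2.2))
        (fun m => (G (m.2.1, m.2.2.2), m.2.2.2, m.2.1))
      = condEnt q
          (fun m => if G (m.2.1, m.2.2.2) then F1 (m.1, m.2.2.1, m.2.2.2)
            else F0 (m.1, m.2.2.1, m.2.2.2))
          (fun m => ((m.2.2.2, m.2.1) : S × Bool)) :=
    condEnt_comp_right (P := q) _ (fun m => ((m.2.2.2, m.2.1) : S × Bool))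
      (fun k => ((G (k.2, k.1), k.1, k.2) : Bool × S × Bool)) hinjV
  have eH : condEnt q
        (fun m => if G (m.2.1, m.2.2.2) then F1 (m.1, m.2.2.1, m.2.2.2)
          else F0 (m.1, m.2.2.1, m.2.2.2))
        (fun m => (G (m.2.1, m.2.2.2), m.2.2.2, m.2.1))
      = ∑ σ, ((p σ / 2) * ent UU (gBw' F0 F1 σ (G (true, σ)))
          + (p σ / 2) * ent UU (gBw' F0 F1 σ (G (false, σ)))) := by
    rw [eVH, condEnt_decomp hq0]
    beta_reduce
    simp only [Fintype.sum_prod_type, Fintype.sum_bool]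
    refine Finset.sum_congr rfl fun σ _ => ?_
    congr 1
    · rw [PrK σ true]
      rcases eq_or_ne (p σ) 0 with h0 | h0
      · rw [h0]; norm_num
      · rw [cellEntQ σ true h0]
    · rw [PrK σ false]
      rcases eq_or_ne (p σ) 0 with h0 | h0
      · rw [h0]; norm_num
      · rw [cellEntQ σ false h0]
  ----------------------------------------------------------------
  -- triple term
  ----------------------------------------------------------------
  have etr : tripleCondInf q (fun m => A (m.1, m.2.2.1, m.2.2.2))
        (fun m => xor (A (m.1, m.2.2.1, m.2.2.2)) m.1)
        (fun m => m.2.2.1)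
        (fun m => (G (m.2.1, m.2.2.2), m.2.2.2))
      = ∑ σ, p σ * (ent UU (gA' A σ) + ent UU (gU' A σ) + ent UU gZ'
          - ent UU (fun n => (gA' A σ n, gU' A σ n, gZ' n))) := by
    rw [tripleCondInf_decomp hq0]
    beta_reduce
    trans (∑ k : Bool × S, Pr q
        (fun m => ((G (m.2.1, m.2.2.2), m.2.2.2) : Bool × S) = k)
        * (ent UU (gA' A k.2) + ent UU (gU' A k.2) + ent UU gZ'
            - ent UU (fun n => (gA' A k.2 n, gU' A k.2 n, gZ' n))))
    · refine Finset.sum_congr rfl fun k _ => ?_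
      obtain ⟨w, σ⟩ := k
      rcases eq_or_ne (Pr q
          (fun m => ((G (m.2.1, m.2.2.2), m.2.2.2) : Bool × S) = (w, σ))) 0 with h0 | h0
      · rw [h0, zero_mul, zero_mul]
      · congr 1
        rw [cellEntR w σ h0 (fun m => A (m.1, m.2.2.1, m.2.2.2)) (gA' A σ)
              (fun m h => by simp only [h]; rfl),
            cellEntR w σ h0 (fun m => xor (A (m.1, m.2.2.1, m.2.2.2)) m.1) (gU' A σ)
              (fun m h => by simp only [h]; rfl),
            cellEntR w σ h0 (fun m => m.2.2.1) gZ' (fun m h => rfl),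
            cellEntR w σ h0
              (fun m => (A (m.1, m.2.2.1, m.2.2.2),
                xor (A (m.1, m.2.2.1, m.2.2.2)) m.1, m.2.2.1))
              (fun n => (gA' A σ n, gU' A σ n, gZ' n))
              (fun m h => by simp only [h]; rfl)]
    · simp only [Fintype.sum_prod_type]
      rw [Finset.sum_comm]
      refine Finset.sum_congr rfl fun σ _ => ?_
      rw [Fintype.sum_bool]
      beta_reduce
      have hsum : Pr q (fun m => ((G (m.2.1, m.2.2.2), m.2.2.2) : Bool × S) = (true, σ))
          + Pr q (fun m => ((G (m.2.1, m.2.2.2), m.2.2.2) : Bool × S) = (false, σ))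
          = p σ := by
        rw [PrW true σ, PrW false σ]
        cases hg1 : G (true, σ) <;> cases hg2 : G (false, σ) <;> simp [hg1, hg2] <;> ring
      have key : ∀ x y z T : ℝ, x + y = z → x * T + y * T = z * T := by
        intro x y z T h
        rw [← h]; ring
      exact key _ _ _ _ hsum
  ----------------------------------------------------------------
  -- final combination
  ----------------------------------------------------------------
  rw [e1, e0, e3, etr, eH]
  apply combo_le
  intro σ
  have h := per_sigma UU_isPMF (gA' A σ) (gU' A σ) gZ'
    (gBw' F0 F1 σ (G (false, σ))) (gBw' F0 F1 σ (G (true, σ)))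
  have h2 := mul_le_mul_of_nonneg_left h (hp0 σ)
  ring_nf at h2 ⊢
  linarith

end Aux

set_option maxHeartbeats 2000000

/-- **Theorem 3.** In the racbox-simulation setting (no PR-correlation
assumption), the trade-off inequality
`(1/2)·I(a⊕x : b̃ |(ỹ,s), y=1) + (1/2)·I(a : b̃ |(ỹ,s), y=0) + I(z : b̃ |(ỹ,s,y))
  ≤ (1/2)·I(a : a⊕x : z |(ỹ,s)) + H(b̃ |(ỹ,s,y))` holds. -/
theorem rac_tradeoff_inequality
    {Ω S : Type*} [Fintype Ω] [Fintype S]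
    (P : Ω → ℝ) (hP : IsPMF P)
    (x y z : Ω → Bool) (s : Ω → S)
    (hindep : ∀ (vx vy vz : Bool) (vs : S),
      Pr P (fun ω => x ω = vx ∧ y ω = vy ∧ z ω = vz ∧ s ω = vs)
        = Pr P (fun ω => x ω = vx) * Pr P (fun ω => y ω = vy) *
            Pr P (fun ω => z ω = vz) * Pr P (fun ω => s ω = vs))
    (hx : ∀ v, Pr P (fun ω => x ω = v) = 1/2)
    (hy : ∀ v, Pr P (fun ω => y ω = v) = 1/2)
    (hz : ∀ v, Pr P (fun ω => z ω = v) = 1/2)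
    (A F0 F1 : Bool × Bool × S → Bool) (G : Bool × S → Bool)
    (B : Bool × Bool × S × Bool → Bool)
    (a yt bt b : Ω → Bool)
    (ha : ∀ ω, a ω = A (x ω, z ω, s ω))
    (hyt : ∀ ω, yt ω = G (y ω, s ω))
    (hbt : ∀ ω, bt ω = if yt ω then F1 (x ω, z ω, s ω) else F0 (x ω, z ω, s ω))
    (hb : ∀ ω, b ω = B (yt ω, bt ω, s ω, y ω))
    :
    (1/2) * condMutInf (condPmf P (fun ω => y ω = true))
        (fun ω => xor (a ω) (x ω)) bt (fun ω => (yt ω, s ω))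
      + (1/2) * condMutInf (condPmf P (fun ω => y ω = false))
          a bt (fun ω => (yt ω, s ω))
      + condMutInf P z bt (fun ω => (yt ω, s ω, y ω))
    ≤ (1/2) * tripleCondInf P a (fun ω => xor (a ω) (x ω)) z (fun ω => (yt ω, s ω))
      + condEnt P bt (fun ω => (yt ω, s ω, y ω)) := by
  have hbtf : bt = fun ω => if G (y ω, s ω) then F1 (x ω, z ω, s ω)
      else F0 (x ω, z ω, s ω) := funext fun ω => by rw [hbt ω, hyt ω]
  have haf : a = fun ω => A (x ω, z ω, s ω) := funext ha
  have hytf : yt = fun ω => G (y ω, s ω) := funext hyt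
  subst haf
  subst hytf
  subst hbtf
  -- transfer to the canonical space
  have hp0 : ∀ σ : S, 0 ≤ Pr P (fun ω => s ω = σ) := fun σ => Pr_nonneg hP.1 _
  have hp1 : ∑ σ : S, Pr P (fun ω => s ω = σ) = 1 := by
    rw [sum_Pr_fiber s, hP.2]
  have hqdef : ∀ m : Bool × Bool × Bool × S,
      Pr P (fun ω => ((x ω, y ω, z ω, s ω) : Bool × Bool × Bool × S) = m)
        = Pr P (fun ω => s ω = m.2.2.2) / 8 := by
    intro m
    obtain ⟨vx, vy, vz, σ⟩ := m
    have e : Pr P (fun ω => ((x ω, y ω, z ω, s ω) : Bool × Bool × Bool × S) = (vx, vy, vz, σ))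
        = Pr P (fun ω => x ω = vx ∧ y ω = vy ∧ z ω = vz ∧ s ω = σ) :=
      Pr_congr fun ω => by simp [Prod.mk.injEq]
    rw [e, hindep, hx, hy, hz]
    ring
  have H := main_aux (fun σ => Pr P (fun ω => s ω = σ)) hp0 hp1 A F0 F1 G
    (fun m => Pr P (fun ω => ((x ω, y ω, z ω, s ω) : Bool × Bool × Bool × S) = m)) hqdef
  -- identify each term with its pushforward version
  have E1 : condMutInf (condPmf P (fun ω => y ω = true))
        (fun ω => xor (A (x ω, z ω, s ω)) (x ω))
        (fun ω => if G (y ω, s ω) then F1 (x ω, z ω, s ω) else F0 (x ω, z ω, s ω))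
        (fun ω => (G (y ω, s ω), s ω))
      = condMutInf (condPmf
            (fun m => Pr P (fun ω => ((x ω, y ω, z ω, s ω) : Bool × Bool × Bool × S) = m))
            (fun m => m.2.1 = true))
          (fun m => xor (A (m.1, m.2.2.1, m.2.2.2)) m.1)
          (fun m => if G (m.2.1, m.2.2.2) then F1 (m.1, m.2.2.1, m.2.2.2)
            else F0 (m.1, m.2.2.1, m.2.2.2))
          (fun m => (G (m.2.1, m.2.2.2), m.2.2.2)) :=
    condMutInf_condPmf_push (P := P) (fun ω => ((x ω, y ω, z ω, s ω) : Bool × Bool × Bool × S))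
      (fun m => m.2.1 = true)
      (fun m => xor (A (m.1, m.2.2.1, m.2.2.2)) m.1)
      (fun m => if G (m.2.1, m.2.2.2) then F1 (m.1, m.2.2.1, m.2.2.2)
        else F0 (m.1, m.2.2.1, m.2.2.2))
      (fun m => (G (m.2.1, m.2.2.2), m.2.2.2))
  have E0 : condMutInf (condPmf P (fun ω => y ω = false))
        (fun ω => A (x ω, z ω, s ω))
        (fun ω => if G (y ω, s ω) then F1 (x ω, z ω, s ω) else F0 (x ω, z ω, s ω))
        (fun ω => (G (y ω, s ω), s ω))
      = condMutInf (condPmf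
            (fun m => Pr P (fun ω => ((x ω, y ω, z ω, s ω) : Bool × Bool × Bool × S) = m))
            (fun m => m.2.1 = false))
          (fun m => A (m.1, m.2.2.1, m.2.2.2))
          (fun m => if G (m.2.1, m.2.2.2) then F1 (m.1, m.2.2.1, m.2.2.2)
            else F0 (m.1, m.2.2.1, m.2.2.2))
          (fun m => (G (m.2.1, m.2.2.2), m.2.2.2)) :=
    condMutInf_condPmf_push (P := P) (fun ω => ((x ω, y ω, z ω, s ω) : Bool × Bool × Bool × S))
      (fun m => m.2.1 = false)
      (fun m => A (m.1, m.2.2.1, m.2.2.2))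
      (fun m => if G (m.2.1, m.2.2.2) then F1 (m.1, m.2.2.1, m.2.2.2)
        else F0 (m.1, m.2.2.1, m.2.2.2))
      (fun m => (G (m.2.1, m.2.2.2), m.2.2.2))
  have E3 : condMutInf P z
        (fun ω => if G (y ω, s ω) then F1 (x ω, z ω, s ω) else F0 (x ω, z ω, s ω))
        (fun ω => (G (y ω, s ω), s ω, y ω))
      = condMutInf (fun m => Pr P (fun ω => ((x ω, y ω, z ω, s ω) : Bool × Bool × Bool × S) = m))
          (fun m => m.2.2.1)
          (fun m => if G (m.2.1, m.2.2.2) then F1 (m.1, m.2.2.1, m.2.2.2)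
            else F0 (m.1, m.2.2.1, m.2.2.2))
          (fun m => (G (m.2.1, m.2.2.2), m.2.2.2, m.2.1)) :=
    condMutInf_push (P := P) (fun ω => ((x ω, y ω, z ω, s ω) : Bool × Bool × Bool × S))
      (fun m => m.2.2.1)
      (fun m => if G (m.2.1, m.2.2.2) then F1 (m.1, m.2.2.1, m.2.2.2)
        else F0 (m.1, m.2.2.1, m.2.2.2))
      (fun m => (G (m.2.1, m.2.2.2), m.2.2.2, m.2.1))
  have Etr : tripleCondInf P (fun ω => A (x ω, z ω, s ω))
        (fun ω => xor (A (x ω, z ω, s ω)) (x ω)) z (fun ω => (G (y ω, s ω), s ω))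
      = tripleCondInf
          (fun m => Pr P (fun ω => ((x ω, y ω, z ω, s ω) : Bool × Bool × Bool × S) = m))
          (fun m => A (m.1, m.2.2.1, m.2.2.2))
          (fun m => xor (A (m.1, m.2.2.1, m.2.2.2)) m.1)
          (fun m => m.2.2.1)
          (fun m => (G (m.2.1, m.2.2.2), m.2.2.2)) :=
    tripleCondInf_push (P := P) (fun ω => ((x ω, y ω, z ω, s ω) : Bool × Bool × Bool × S))
      (fun m => A (m.1, m.2.2.1, m.2.2.2))
      (fun m => xor (A (m.1, m.2.2.1, m.2.2.2)) m.1)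
      (fun m => m.2.2.1)
      (fun m => (G (m.2.1, m.2.2.2), m.2.2.2))
  have EH : condEnt P
        (fun ω => if G (y ω, s ω) then F1 (x ω, z ω, s ω) else F0 (x ω, z ω, s ω))
        (fun ω => (G (y ω, s ω), s ω, y ω))
      = condEnt (fun m => Pr P (fun ω => ((x ω, y ω, z ω, s ω) : Bool × Bool × Bool × S) = m))
          (fun m => if G (m.2.1, m.2.2.2) then F1 (m.1, m.2.2.1, m.2.2.2)
            else F0 (m.1, m.2.2.1, m.2.2.2))
          (fun m => (G (m.2.1, m.2.2.2), m.2.2.2, m.2.1)) :=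
    condEnt_push (P := P) (fun ω => ((x ω, y ω, z ω, s ω) : Bool × Bool × Bool × S))
      (fun m => if G (m.2.1, m.2.2.2) then F1 (m.1, m.2.2.1, m.2.2.2)
        else F0 (m.1, m.2.2.1, m.2.2.2))
      (fun m => (G (m.2.1, m.2.2.2), m.2.2.2, m.2.1))
  rw [E1, E0, E3, Etr, EH]
  exact H
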